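/- Under the null hypothesis θ_C = θ_D = θ, the conditional distribution of the final trial state X_n given the total number of successes s(X_n) = s' does not depend on θ; specifically P(X_n = x | s(X_n) = s') = C(n, s')^{-1} · g(x) · 1[s(x) = s'], where g(x) is the parameter-free path-count coefficient of the response-adaptive design. -/

import Mathlib

open Finset

/-!
Under `θ_C = θ_D = θ` a path with `s` successes has probability (allocation weight) ·
`θ^s (1-θ)^(n-s)`, so `P(X_n = x)` and `P(s(X_n) = s')` share the factor `θ^s' (1-θ)^(n-s')`,
which cancels in the quotient. The denominator is then the total allocation weight of the paths
with `s'` successes, which is `C(n, s')`.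
-/

/-- A step in the trial: (allocated to control C?, success?). -/
abbrev TStep : Type := Bool × Bool

/-- A trial history/path: list of (allocation, outcome) pairs. -/
abbrev TPath : Type := List TStep

/-- Probability of a path: product over participants of the allocation probability
(given the history so far) times the Bernoulli outcome probability. -/
noncomputable def pathProbAux (π : TPath → ℝ) (θC θD : ℝ) : TPath → TPath → ℝ
  | _, [] => 1
  | h, a :: rest =>
    ((if a.1 then π h else 1 - π h) *
      (if a.1 then (if a.2 then θC else 1 - θC) else (if a.2 then θD else 1 - θD))) *
    pathProbAux π θC θD (h ++ [a]) rest

/-- Product of allocation probabilities along the path. -/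
noncomputable def allocWeightAux (π : TPath → ℝ) : TPath → TPath → ℝ
  | _, [] => 1
  | h, a :: rest => (if a.1 then π h else 1 - π h) * allocWeightAux π (h ++ [a]) rest

/-- Successes on arm C along a path. -/
def cntSC (p : TPath) : ℕ := (p.filter (fun a => a.1 && a.2)).length
/-- Successes on arm D along a path. -/
def cntSD (p : TPath) : ℕ := (p.filter (fun a => !a.1 && a.2)).length
/-- Allocations to arm C along a path. -/
def cntNC (p : TPath) : ℕ := (p.filter (fun a => a.1)).length
/-- Allocations to arm D along a path. -/
def cntND (p : TPath) : ℕ := (p.filter (fun a => !a.1)).length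

/-- The final state (s_C, s_D, n_C, n_D) of a path. -/
def pstate (p : TPath) : ℕ × ℕ × ℕ × ℕ := (cntSC p, cntSD p, cntNC p, cntND p)

/-- Total number of successes of a state. -/
def sTot (x : ℕ × ℕ × ℕ × ℕ) : ℕ := x.1 + x.2.1

/-- The parameter-free design coefficient `g(x)`: sum of allocation-path
probabilities over all paths of length `n` ending in state `x`. -/
noncomputable def gcoef (n : ℕ) (π : TPath → ℝ) (x : ℕ × ℕ × ℕ × ℕ) : ℝ :=
  ∑ ω : Fin n → TStep,
    if pstate (List.ofFn ω) = x then allocWeightAux π [] (List.ofFn ω) else 0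

/-- Probability of ending in final state `x` under parameters `(θC, θD)`. -/
noncomputable def Pfin (n : ℕ) (π : TPath → ℝ) (θC θD : ℝ) (x : ℕ × ℕ × ℕ × ℕ) : ℝ :=
  ∑ ω : Fin n → TStep,
    if pstate (List.ofFn ω) = x then pathProbAux π θC θD [] (List.ofFn ω) else 0

/-- Probability that the total number of successes equals `s'` under the null `θC = θD = θ`. -/
noncomputable def PtotS (n : ℕ) (π : TPath → ℝ) (θ : ℝ) (s' : ℕ) : ℝ :=
  ∑ ω : Fin n → TStep,
    if sTot (pstate (List.ofFn ω)) = s' then pathProbAux π θ θ [] (List.ofFn ω) else 0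

def cntS (p : TPath) : ℕ := (p.filter (fun a => a.2)).length

def cntF (p : TPath) : ℕ := (p.filter (fun a => !a.2)).length

lemma cntS_cons (a : TStep) (p : TPath) : cntS (a :: p) = cntS p + (if a.2 then 1 else 0) := by
  cases hb : a.2 <;> simp [cntS, hb]

lemma cntF_cons (a : TStep) (p : TPath) : cntF (a :: p) = cntF p + (if a.2 then 0 else 1) := by
  cases hb : a.2 <;> simp [cntF, hb]

lemma cntS_add_cntF (p : TPath) : cntS p + cntF p = p.length := by
  induction p with
  | nil => rfl
  | cons a p ih => rw [cntS_cons, cntF_cons, List.length_cons]; split_ifs <;> omega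

lemma sTot_pstate (p : TPath) : sTot (pstate p) = cntS p := by
  induction p with
  | nil => rfl
  | cons a p ih =>
    obtain ⟨c, b⟩ := a
    cases c <;> cases b <;> simp_all [sTot, pstate, cntS, cntSC, cntSD] <;> omega

lemma pathProbAux_self (π : TPath → ℝ) (θ : ℝ) (h p : TPath) :
    pathProbAux π θ θ h p = allocWeightAux π h p * θ ^ cntS p * (1 - θ) ^ cntF p := by
  induction p generalizing h with
  | nil => simp [pathProbAux, allocWeightAux, cntS, cntF]
  | cons a p ih =>
    obtain ⟨c, b⟩ := a
    rw [pathProbAux, allocWeightAux, ih, cntS_cons, cntF_cons]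
    cases c <;> cases b <;> simp only [Bool.false_eq_true, if_true, if_false] <;> ring

lemma sum_ofFn_succ {α M : Type*} [Fintype α] [AddCommMonoid M] (n : ℕ) (f : List α → M) :
    ∑ ω : Fin (n + 1) → α, f (List.ofFn ω) = ∑ a, ∑ ω : Fin n → α, f (a :: List.ofFn ω) := by
  rw [← (Fin.consEquiv fun _ => α).sum_comp, Fintype.sum_prod_type]
  simp [Fin.consEquiv, List.ofFn_succ]

/-- Summing out each allocation decision (`π h + (1 - π h) = 1`) leaves weight one per outcome
sequence, and `n.choose s` outcome sequences have `s` successes. -/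
lemma sum_allocWeightAux_cntS_eq_choose (π : TPath → ℝ) (n s : ℕ) (h : TPath) :
    ∑ ω : Fin n → TStep,
      (if cntS (List.ofFn ω) = s then allocWeightAux π h (List.ofFn ω) else 0) = n.choose s := by
  induction n generalizing s h with
  | zero => cases s <;> simp [cntS, allocWeightAux]
  | succ n ih =>
    rw [sum_ofFn_succ n fun p => if cntS p = s then allocWeightAux π h p else 0,
      Fintype.sum_prod_type]
    simp only [Fintype.sum_bool, cntS_cons, allocWeightAux, ← mul_ite_zero, ← Finset.mul_sum]
    cases s with
    | zero => simp [ih]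
    | succ s => simp [ih, Nat.choose_succ_succ']; ring

lemma pathProbAux_self_of_cntS_eq (π : TPath → ℝ) (θ : ℝ) {s : ℕ} (h p : TPath)
    (hs : cntS p = s) :
    pathProbAux π θ θ h p = θ ^ s * (1 - θ) ^ (p.length - s) * allocWeightAux π h p := by
  rw [pathProbAux_self, ← cntS_add_cntF, hs, Nat.add_sub_cancel_left]
  ring

lemma PtotS_eq (n : ℕ) (π : TPath → ℝ) (θ : ℝ) (s : ℕ) :
    PtotS n π θ s = θ ^ s * (1 - θ) ^ (n - s) * n.choose s := by
  rw [PtotS, ← sum_allocWeightAux_cntS_eq_choose π n s [], Finset.mul_sum]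
  refine Finset.sum_congr rfl fun ω _ => ?_
  rw [sTot_pstate]
  split_ifs with hs
  · rw [pathProbAux_self_of_cntS_eq π θ [] _ hs, List.length_ofFn]
  · rw [mul_zero]

lemma Pfin_self_eq (n : ℕ) (π : TPath → ℝ) (θ : ℝ) {s : ℕ} (x : ℕ × ℕ × ℕ × ℕ)
    (hx : sTot x = s) :
    Pfin n π θ θ x = θ ^ s * (1 - θ) ^ (n - s) * gcoef n π x := by
  rw [Pfin, gcoef, Finset.mul_sum]
  refine Finset.sum_congr rfl fun ω _ => ?_
  split_ifs with hω
  · have hs : cntS (List.ofFn ω) = s := by rw [← sTot_pstate, hω, hx]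
    rw [pathProbAux_self_of_cntS_eq π θ [] _ hs, List.length_ofFn]
  · rw [mul_zero]

theorem statement1_general (n : ℕ) (π : TPath → ℝ)
    (θ : ℝ) (hθ : θ ∈ Set.Ioo (0:ℝ) 1) (s' : ℕ) (x : ℕ × ℕ × ℕ × ℕ) :
    (if sTot x = s' then Pfin n π θ θ x else 0) / PtotS n π θ s'
      = (n.choose s' : ℝ)⁻¹ * gcoef n π x * (if sTot x = s' then 1 else 0) := by
  have hK : θ ^ s' * (1 - θ) ^ (n - s') ≠ 0 :=
    mul_ne_zero (pow_ne_zero _ hθ.1.ne') (pow_ne_zero _ (sub_ne_zero.mpr hθ.2.ne'))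
  split_ifs with hx
  · rw [Pfin_self_eq n π θ x hx, PtotS_eq, mul_div_mul_left _ _ hK, mul_one, div_eq_inv_mul]
  · rw [zero_div, mul_zero]

/-- under the null hypothesis `θC = θD = θ`, the conditional distribution
of the final state given `s(X_n) = s'` is `C(n,s')⁻¹ · g(x) · 1[s(x) = s']`,
which does not depend on `θ`. -/
theorem statement1 (n : ℕ) (π : TPath → ℝ) (hπ : ∀ h, π h ∈ Set.Icc (0:ℝ) 1)
    (θ : ℝ) (hθ : θ ∈ Set.Ioo (0:ℝ) 1) (s' : ℕ) (hs : s' ≤ n) (x : ℕ × ℕ × ℕ × ℕ) :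
    (if sTot x = s' then Pfin n π θ θ x else 0) / PtotS n π θ s'
      = (n.choose s' : ℝ)⁻¹ * gcoef n π x * (if sTot x = s' then 1 else 0) :=
  statement1_general n π θ hθ s' x
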